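/- Matrix determinant asymptotic: let M(s) be an n×n positive definite Hermitian matrix of the form M(s) = D(s) + B where D(s) = diag(s₁^(−1), …, s_d^(−1), 1, …, 1) with s_i > 0, and B is a Hermitian matrix with ‖B‖ ≤ K. Then there are constants c, C > 0 depending only on n and K such that for all sufficiently small max s_i, the (k,k)-entry of the inverse satisfies c·s_k ≤ (M(s)^(−1))_{kk} ≤ C·s_k for 1 ≤ k ≤ d, provided additionally the lower-right block of M(s) is positive definite with determinant bounded below by a constant δ > 0. -/

import Mathlib

/-!
Write `x = M⁻¹ eₖ`, so that `(M⁻¹)ₖₖ = x* M x`. The lower bound is Cauchy–Schwarz for the form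
`M`: `(M⁻¹)ₖₖ ≥ 1 / Mₖₖ ≥ sₖ / 2`.

For the upper bound, the trailing rows of `M x = eₖ` say `C x₂ = -B₂₁ x₁`, and the entries of
`C⁻¹ = adj C / det C` are bounded because `det C ≥ δ`. So the `ℓ¹` norm of `x` is controlled by
that of its leading part `x₁`, and once `s ≤ s₀` the perturbation `x* B x` is at most half of
`∑ₗ sₗ⁻¹ |xₗ|²`. Hence `(M⁻¹)ₖₖ ≥ ½ sₖ⁻¹ |xₖ|² ≥ ½ sₖ⁻¹ ((M⁻¹)ₖₖ)²`.
-/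

open Matrix
open scoped ComplexOrder

theorem mul_sq_le_sum_mul_sq_div_two {ι : Type*} [Fintype ι] {y w : ι → ℝ} {S ρ K : ℝ}
    (hK : 0 ≤ K) (hS0 : 0 ≤ S) (hS : S ≤ ρ * ∑ i, y i)
    (hw : ∀ i, 2 * (K * Fintype.card ι * ρ ^ 2) ≤ w i) :
    K * S ^ 2 ≤ (∑ i, w i * y i ^ 2) / 2 :=
  calc K * S ^ 2 ≤ K * ρ ^ 2 * (∑ i, y i) ^ 2 := by
        rw [mul_assoc, ← mul_pow]
        exact mul_le_mul_of_nonneg_left (pow_le_pow_left₀ hS0 hS 2) hK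
    _ ≤ K * ρ ^ 2 * (Fintype.card ι * ∑ i, y i ^ 2) := by
        gcongr
        simpa using sq_sum_le_card_mul_sum_sq (s := Finset.univ) (f := y)
    _ ≤ (∑ i, w i * y i ^ 2) / 2 := by
        rw [Finset.mul_sum, Finset.mul_sum, Finset.sum_div]
        refine Finset.sum_le_sum fun i _ => ?_
        linarith [mul_le_mul_of_nonneg_right (hw i) (sq_nonneg (y i))]

namespace Matrix

variable {n : Type*} [Fintype n]

theorem norm_mulVec_apply_le {m R : Type*} [SeminormedRing R] {A : Matrix m n R} {a : ℝ}
    (hA : ∀ i j, ‖A i j‖ ≤ a) (v : n → R) (i : m) :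
    ‖(A *ᵥ v) i‖ ≤ a * ∑ j, ‖v j‖ :=
  calc ‖(A *ᵥ v) i‖ ≤ ∑ j, ‖A i j * v j‖ := norm_sum_le _ _
    _ ≤ ∑ j, a * ‖v j‖ := Finset.sum_le_sum fun j _ =>
        (norm_mul_le _ _).trans (mul_le_mul_of_nonneg_right (hA i j) (norm_nonneg _))
    _ = a * ∑ j, ‖v j‖ := (Finset.mul_sum ..).symm

theorem norm_dotProduct_mulVec_le {𝕜 : Type*} [RCLike 𝕜] {A : Matrix n n 𝕜} {a : ℝ}
    (hA : ∀ i j, ‖A i j‖ ≤ a) (x : n → 𝕜) :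
    ‖star x ⬝ᵥ (A *ᵥ x)‖ ≤ a * (∑ i, ‖x i‖) ^ 2 :=
  calc ‖star x ⬝ᵥ (A *ᵥ x)‖ ≤ ∑ i, ‖star (x i) * (A *ᵥ x) i‖ := norm_sum_le _ _
    _ ≤ ∑ i, ‖x i‖ * (a * ∑ j, ‖x j‖) := Finset.sum_le_sum fun i _ => by
        rw [norm_mul, norm_star]
        exact mul_le_mul_of_nonneg_left (norm_mulVec_apply_le hA x i) (norm_nonneg _)
    _ = a * (∑ i, ‖x i‖) ^ 2 := by rw [← Finset.sum_mul]; ring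

variable [DecidableEq n]

section NormedField

variable {F : Type*} [NormedField F]

theorem norm_det_le {A : Matrix n n F} {b : ℝ} (hA : ∀ i j, ‖A i j‖ ≤ b) :
    ‖A.det‖ ≤ (Fintype.card n).factorial * b ^ Fintype.card n :=
  (det_le (abv := NormedField.toAbsoluteValue F) hA).trans_eq (nsmul_eq_mul _ _)

theorem norm_inv_apply_le {A : Matrix n n F} {b δ : ℝ} (hb : 1 ≤ b) (hA : ∀ i j, ‖A i j‖ ≤ b)
    (hδ : 0 < δ) (hdet : δ ≤ ‖A.det‖) (i j : n) :
    ‖A⁻¹ i j‖ ≤ (Fintype.card n).factorial * b ^ Fintype.card n / δ := by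
  rw [inv_def, smul_apply, smul_eq_mul, norm_mul, Ring.inverse_eq_inv', norm_inv,
    adjugate_apply, inv_mul_eq_div]
  gcongr
  refine norm_det_le fun k l => ?_
  rw [updateRow_apply]
  split_ifs
  · rw [Pi.single_apply]
    split_ifs <;> simp [hb, zero_le_one.trans hb]
  · exact hA k l

end NormedField

section RCLike

variable {𝕜 : Type*} [RCLike 𝕜] {M : Matrix n n 𝕜}

theorem mulVec_inv_mulVec_single (hM : IsUnit M.det) (k : n) :
    M *ᵥ (M⁻¹ *ᵥ Pi.single k 1) = Pi.single k 1 := by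
  rw [mulVec_mulVec, mul_nonsing_inv _ hM, one_mulVec]

theorem re_dotProduct_mulVec_inv_mulVec_single (hM : IsUnit M.det) (k : n) :
    RCLike.re (star (M⁻¹ *ᵥ Pi.single k 1) ⬝ᵥ (M *ᵥ (M⁻¹ *ᵥ Pi.single k 1))) =
      RCLike.re (M⁻¹ k k) := by
  rw [mulVec_inv_mulVec_single hM, dotProduct_single, mul_one]
  simp [RCLike.star_def]

/-- Cauchy–Schwarz for the form `M`, applied to `M⁻¹ eₖ` and `eₖ`. -/
theorem PosDef.inv_re_apply_le_re_inv_apply (hM : M.PosDef) (k : n) :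
    (RCLike.re (M k k))⁻¹ ≤ RCLike.re (M⁻¹ k k) := by
  set e : n → 𝕜 := Pi.single k 1
  set x := M⁻¹ *ᵥ e
  set a := RCLike.re (M k k)
  set r : 𝕜 := ((a⁻¹ : ℝ) : 𝕜)
  have hMx : M *ᵥ x = e :=
    mulVec_inv_mulVec_single ((isUnit_iff_isUnit_det M).mp hM.isUnit) k
  have hMkk : M k k = a := (hM.1.coe_re_apply_self k).symm
  have ha : a ≠ 0 := (RCLike.pos_iff.mp (hMkk ▸ hM.diag_pos)).1.ne'
  have hra : r * a = 1 := by simp [r, ha]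
  have hstar_r : star r = r := RCLike.conj_ofReal _
  have hstar_e : star e = e := by simp [e]
  have hxe : star x ⬝ᵥ e = star (x k) := by simp [e]
  have hxMe : star x ⬝ᵥ (M *ᵥ e) = 1 := by
    rw [dotProduct_mulVec, ← hM.1.eq, ← star_mulVec, hMx, hstar_e]
    simp [e]
  have hee : e ⬝ᵥ e = 1 := by simp [e]
  have heMe : e ⬝ᵥ (M *ᵥ e) = a := by simp [e, hMkk]
  have hquad : star (x - r • e) ⬝ᵥ (M *ᵥ (x - r • e)) = star (x k) - r := by
    rw [star_sub, star_smul, hstar_e, hstar_r, mulVec_sub, mulVec_smul, hMx]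
    simp only [sub_dotProduct, dotProduct_sub, smul_dotProduct, dotProduct_smul, smul_eq_mul,
      hxe, hxMe, hee, heMe]
    linear_combination r * hra
  have hxk : x k = M⁻¹ k k := by simp [x, e]
  have hpos :=
    (RCLike.nonneg_iff.mp (hquad ▸ hM.posSemidef.dotProduct_mulVec_nonneg (x - r • e))).1
  rwa [map_sub, RCLike.star_def, RCLike.conj_re, RCLike.ofReal_re, sub_nonneg, hxk] at hpos

theorem sum_mul_norm_sq_sub_le_re_dotProduct_mulVec (w : n → ℝ) {B : Matrix n n 𝕜} {K : ℝ}
    (hB : ∀ i j, ‖B i j‖ ≤ K) (x : n → 𝕜) :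
    ∑ i, w i * ‖x i‖ ^ 2 - K * (∑ i, ‖x i‖) ^ 2 ≤
      RCLike.re (star x ⬝ᵥ ((diagonal fun i => (w i : 𝕜)) + B) *ᵥ x) := by
  have hdiag : RCLike.re (star x ⬝ᵥ (diagonal fun i => (w i : 𝕜)) *ᵥ x) =
      ∑ i, w i * ‖x i‖ ^ 2 := by
    simp only [dotProduct, mulVec_diagonal, map_sum]
    refine Finset.sum_congr rfl fun i _ => ?_
    rw [Pi.star_apply, RCLike.star_def, mul_left_comm, RCLike.conj_mul]
    norm_cast
  rw [add_mulVec, dotProduct_add, map_add, hdiag]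
  have := (RCLike.abs_re_le_norm _).trans (norm_dotProduct_mulVec_le hB x)
  linarith [neg_abs_le (RCLike.re (star x ⬝ᵥ B *ᵥ x))]

theorem PosDef.inv_two_mul_le_re_inv_apply {w : n → ℝ} {B : Matrix n n 𝕜} {K : ℝ}
    (hM : M.PosDef) (hMB : M = (diagonal fun i => (w i : 𝕜)) + B) (hB : ∀ i j, ‖B i j‖ ≤ K)
    {k : n} (hk : K ≤ w k) :
    (2 * w k)⁻¹ ≤ RCLike.re (M⁻¹ k k) := by
  have hMkk : RCLike.re (M k k) ≤ 2 * w k := by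
    rw [hMB, add_apply, diagonal_apply_eq, map_add, RCLike.ofReal_re]
    linarith [(RCLike.re_le_norm _).trans (hB k k)]
  exact (inv_anti₀ (RCLike.pos_iff.mp hM.diag_pos).1 hMkk).trans
    (hM.inv_re_apply_le_re_inv_apply k)

end RCLike

section Blocks

variable {𝕜 : Type*} [RCLike 𝕜] {d m : ℕ}

theorem sum_norm_le_of_mulVec_natAdd_eq_zero {M : Matrix (Fin (d + m)) (Fin (d + m)) 𝕜}
    {x : Fin (d + m) → 𝕜} {β K : ℝ} (hβ0 : 0 ≤ β)
    (hC : IsUnit (M.submatrix (Fin.natAdd d) (Fin.natAdd d)).det)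
    (hβ : ∀ i j, ‖(M.submatrix (Fin.natAdd d) (Fin.natAdd d))⁻¹ i j‖ ≤ β)
    (hK : ∀ j l, ‖M (Fin.natAdd d j) (Fin.castAdd m l)‖ ≤ K)
    (hx : ∀ j, (M *ᵥ x) (Fin.natAdd d j) = 0) :
    ∑ i, ‖x i‖ ≤ (1 + m ^ 2 * β * K) * ∑ l, ‖x (Fin.castAdd m l)‖ := by
  set C := M.submatrix (Fin.natAdd d) (Fin.natAdd d)
  set x₁ : Fin d → 𝕜 := fun l => x (Fin.castAdd m l)
  set x₂ : Fin m → 𝕜 := fun j => x (Fin.natAdd d j)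
  set w := M.submatrix (Fin.natAdd d) (Fin.castAdd m) *ᵥ x₁
  have hCx : C *ᵥ x₂ = -w := by
    funext j
    have := hx j
    rw [mulVec, dotProduct, Fin.sum_univ_add] at this
    exact (neg_eq_of_add_eq_zero_right this).symm
  have hx₂ : x₂ = C⁻¹ *ᵥ -w := by
    rw [← hCx, mulVec_mulVec, nonsing_inv_mul _ hC, one_mulVec]
  have hw : ∀ j, ‖(-w) j‖ ≤ K * ∑ l, ‖x₁ l‖ := fun j => by
    rw [Pi.neg_apply, norm_neg]
    exact norm_mulVec_apply_le (fun j l => hK j l) x₁ j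
  have hx₂_le : ∀ j, ‖x₂ j‖ ≤ m * β * K * ∑ l, ‖x₁ l‖ := fun j =>
    calc ‖x₂ j‖ ≤ β * ∑ i, ‖(-w) i‖ := hx₂ ▸ norm_mulVec_apply_le hβ _ j
      _ ≤ β * ∑ _i : Fin m, K * ∑ l, ‖x₁ l‖ := by gcongr with i; exact hw i
      _ = m * β * K * ∑ l, ‖x₁ l‖ := by
          simp only [Finset.sum_const, Finset.card_univ, Fintype.card_fin, nsmul_eq_mul]
          ring
  calc ∑ i, ‖x i‖ = ∑ l, ‖x₁ l‖ + ∑ j, ‖x₂ j‖ := Fin.sum_univ_add _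
    _ ≤ ∑ l, ‖x₁ l‖ + ∑ _j : Fin m, m * β * K * ∑ l, ‖x₁ l‖ := by
        gcongr with j; exact hx₂_le j
    _ = (1 + m ^ 2 * β * K) * ∑ l, ‖x₁ l‖ := by
        simp only [Finset.sum_const, Finset.card_univ, Fintype.card_fin, nsmul_eq_mul]
        ring

theorem mul_re_inv_apply_castAdd_le {M B : Matrix (Fin (d + m)) (Fin (d + m)) 𝕜}
    {w : Fin (d + m) → ℝ} {β K : ℝ} (hM : M.PosDef)
    (hMB : M = (diagonal fun i => (w i : 𝕜)) + B) (hw : 0 ≤ w) (hβ0 : 0 ≤ β)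
    (hβ : ∀ i j, ‖(M.submatrix (Fin.natAdd d) (Fin.natAdd d))⁻¹ i j‖ ≤ β)
    (hB : ∀ i j, ‖B i j‖ ≤ K)
    (hw_lead : ∀ l, 2 * (K * d * (1 + m ^ 2 * β * K) ^ 2) ≤ w (Fin.castAdd m l)) (k : Fin d) :
    w (Fin.castAdd m k) * RCLike.re (M⁻¹ (Fin.castAdd m k) (Fin.castAdd m k)) ≤ 2 := by
  set kk := Fin.castAdd m k
  set x := M⁻¹ *ᵥ Pi.single kk 1
  set t := RCLike.re (M⁻¹ kk kk)
  set E := ∑ l, w (Fin.castAdd m l) * ‖x (Fin.castAdd m l)‖ ^ 2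
  have hdet : IsUnit M.det := (isUnit_iff_isUnit_det M).mp hM.isUnit
  have hK : 0 ≤ K := (norm_nonneg _).trans (hB kk kk)
  have ht : 0 < t := (RCLike.pos_iff.mp hM.inv.diag_pos).1
  have ht_le : t ≤ ‖x kk‖ := by simpa [x] using RCLike.re_le_norm (M⁻¹ kk kk)
  have hℓ1 : ∑ i, ‖x i‖ ≤ (1 + m ^ 2 * β * K) * ∑ l, ‖x (Fin.castAdd m l)‖ := by
    refine sum_norm_le_of_mulVec_natAdd_eq_zero hβ0
      ((isUnit_iff_isUnit_det _).mp (hM.submatrix (Fin.natAdd_injective m d)).isUnit) hβ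
      (fun j l => ?_) (fun j => ?_)
    · have hne : Fin.natAdd d j ≠ Fin.castAdd m l := by simp [Fin.ext_iff]; omega
      simpa [hMB, diagonal_apply_ne _ hne] using hB _ _
    · have hne : Fin.natAdd d j ≠ kk := by simp [kk, Fin.ext_iff]; omega
      rw [mulVec_inv_mulVec_single hdet]
      exact Pi.single_eq_of_ne hne _
  have hBx : K * (∑ i, ‖x i‖) ^ 2 ≤ E / 2 :=
    mul_sq_le_sum_mul_sq_div_two hK (Finset.sum_nonneg fun i _ => norm_nonneg _) hℓ1
      (by simpa using hw_lead)
  have hE : E ≤ ∑ i, w i * ‖x i‖ ^ 2 := by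
    rw [Fin.sum_univ_add]
    exact le_add_of_nonneg_right (Finset.sum_nonneg fun j _ => mul_nonneg (hw _) (sq_nonneg _))
  have hkk : w kk * t ^ 2 ≤ E := by
    calc w kk * t ^ 2 ≤ w kk * ‖x kk‖ ^ 2 := by gcongr; exact hw kk
      _ ≤ E := Finset.single_le_sum
          (f := fun l => w (Fin.castAdd m l) * ‖x (Fin.castAdd m l)‖ ^ 2)
          (fun l _ => mul_nonneg (hw _) (sq_nonneg _)) (Finset.mem_univ k)
  have henergy := sum_mul_norm_sq_sub_le_re_dotProduct_mulVec w hB x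
  rw [← hMB, re_dotProduct_mulVec_inv_mulVec_single hdet] at henergy
  have hEt : E ≤ 2 * t := by linarith
  refine le_of_mul_le_mul_right ?_ ht
  linarith

end Blocks

end Matrix

noncomputable def diagWeight {d : ℕ} (m : ℕ) (s : Fin d → ℝ) (i : Fin (d + m)) : ℝ :=
  if h : (i : ℕ) < d then (s ⟨i, h⟩)⁻¹ else 1

section diagWeight

variable {d : ℕ} (m : ℕ) (s : Fin d → ℝ)

@[simp]
theorem diagWeight_castAdd (l : Fin d) : diagWeight m s (Fin.castAdd m l) = (s l)⁻¹ := by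
  simp [diagWeight]

@[simp]
theorem diagWeight_natAdd (j : Fin m) : diagWeight m s (Fin.natAdd d j) = 1 := by
  simp [diagWeight]

theorem diagWeight_nonneg (hs : 0 ≤ s) : 0 ≤ diagWeight m s := fun i => by
  unfold diagWeight
  split_ifs
  exacts [inv_nonneg.2 (hs _), zero_le_one]

theorem ofReal_diagWeight (i : Fin (d + m)) :
    (diagWeight m s i : ℂ) = if h : (i : ℕ) < d then ((s ⟨i, h⟩)⁻¹ : ℂ) else 1 := by
  unfold diagWeight
  split_ifs <;> simp

theorem norm_inv_submatrix_natAdd_le {B : Matrix (Fin (d + m)) (Fin (d + m)) ℂ} {K δ : ℝ}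
    (hK : 0 ≤ K) (hB : ∀ i j, ‖B i j‖ ≤ K) (hδ : 0 < δ)
    (hdet : δ ≤ ‖(((diagonal fun i => (diagWeight m s i : ℂ)) + B).submatrix
      (Fin.natAdd d) (Fin.natAdd d)).det‖) (i j : Fin m) :
    ‖(((diagonal fun i => (diagWeight m s i : ℂ)) + B).submatrix
      (Fin.natAdd d) (Fin.natAdd d))⁻¹ i j‖ ≤ m.factorial * (1 + K) ^ m / δ := by
  have hentry : ∀ i j, ‖(((diagonal fun i => (diagWeight m s i : ℂ)) + B).submatrix
      (Fin.natAdd d) (Fin.natAdd d)) i j‖ ≤ 1 + K := fun i j => by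
    refine (norm_add_le _ _).trans (add_le_add ?_ (hB _ _))
    rw [diagonal_apply]
    split_ifs <;> simp
  simpa using norm_inv_apply_le (by linarith) hentry hδ hdet i j

end diagWeight

theorem stmt5_general (d m : ℕ) (K δ : ℝ) (hK : 0 < K) (hδ : 0 < δ) :
    ∃ c C' s₀ : ℝ, 0 < c ∧ 0 < C' ∧ 0 < s₀ ∧
      ∀ (s : Fin d → ℝ) (B : Matrix (Fin (d + m)) (Fin (d + m)) ℂ),
        (∀ i, 0 < s i ∧ s i < 1) → (∀ i, s i ≤ s₀) →
        B.IsHermitian → (∀ i j, ‖B i j‖ ≤ K) →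
        let D : Matrix (Fin (d + m)) (Fin (d + m)) ℂ :=
          Matrix.diagonal (fun i =>
            if h : (i : ℕ) < d then ((s ⟨i, h⟩)⁻¹ : ℂ) else 1)
        (D + B).PosDef →
        δ ≤ (((D + B).submatrix (Fin.natAdd d) (Fin.natAdd d)).det).re →
        ∀ k : Fin d,
          c * s k ≤ (((D + B)⁻¹) (Fin.castAdd m k) (Fin.castAdd m k)).re ∧
          (((D + B)⁻¹) (Fin.castAdd m k) (Fin.castAdd m k)).re ≤ C' * s k := by
  set β : ℝ := m.factorial * (1 + K) ^ m / δ
  set γ : ℝ := K * d * (1 + m ^ 2 * β * K) ^ 2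
  have hγ : 0 ≤ γ := by positivity
  refine ⟨1 / 2, 2, (K + 2 * γ)⁻¹, by norm_num, by norm_num, by positivity, ?_⟩
  intro s B hs hs₀ _ hB D hM hC k
  have hD : D = diagonal fun i => (diagWeight m s i : ℂ) := by simp only [D, ofReal_diagWeight]
  rw [hD] at hM hC ⊢
  have hs_inv : ∀ l, K + 2 * γ ≤ (s l)⁻¹ := fun l => by
    simpa using inv_anti₀ (hs l).1 (hs₀ l)
  have hupper := mul_re_inv_apply_castAdd_le (w := diagWeight m s) hM rfl
    (diagWeight_nonneg m s fun l => (hs l).1.le) (by positivity)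
    (norm_inv_submatrix_natAdd_le m s hK.le hB hδ (hC.trans (Complex.re_le_norm _))) hB
    (fun l => by rw [diagWeight_castAdd]; linarith [hs_inv l]) k
  have hlower := hM.inv_two_mul_le_re_inv_apply (w := diagWeight m s) rfl hB
    (k := Fin.castAdd m k) (by rw [diagWeight_castAdd]; linarith [hs_inv k])
  rw [diagWeight_castAdd, inv_mul_le_iff₀ (hs k).1] at hupper
  rw [diagWeight_castAdd, mul_inv, inv_inv] at hlower
  simp only [RCLike.re_to_complex] at hupper hlower
  exact ⟨by linarith, by linarith⟩

/-- Inverse diagonal entry asymptotics: for `M(s) = D(s) + B` with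
`D(s) = diag(s₁⁻¹,…,s_d⁻¹,1,…,1)`, `B` Hermitian with entries bounded by `K`,
`M(s)` positive definite and trailing block determinant bounded below by `δ`,
the diagonal entries of the inverse satisfy `c s_k ≤ (M(s)⁻¹)_{kk} ≤ C' s_k`. -/
theorem stmt5 (d m : ℕ) (hd : 1 ≤ d) (K δ : ℝ) (hK : 0 < K) (hδ : 0 < δ) :
    ∃ c C' s₀ : ℝ, 0 < c ∧ 0 < C' ∧ 0 < s₀ ∧
      ∀ (s : Fin d → ℝ) (B : Matrix (Fin (d + m)) (Fin (d + m)) ℂ),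
        (∀ i, 0 < s i ∧ s i < 1) → (∀ i, s i ≤ s₀) →
        B.IsHermitian → (∀ i j, ‖B i j‖ ≤ K) →
        let D : Matrix (Fin (d + m)) (Fin (d + m)) ℂ :=
          Matrix.diagonal (fun i =>
            if h : (i : ℕ) < d then ((s ⟨i, h⟩)⁻¹ : ℂ) else 1)
        (D + B).PosDef →
        δ ≤ (((D + B).submatrix (Fin.natAdd d) (Fin.natAdd d)).det).re →
        ∀ k : Fin d,
          c * s k ≤ (((D + B)⁻¹) (Fin.castAdd m k) (Fin.castAdd m k)).re ∧
          (((D + B)⁻¹) (Fin.castAdd m k) (Fin.castAdd m k)).re ≤ C' * s k :=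
  stmt5_general d m K δ hK hδ
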